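/- Consider the error dynamics ṡ = −η s + f̃ with η > 0 under the monotonicity assumption (with function α(x, t) and constant D₁ > 0), together with the momentum adaptation law v̂̇ = −γ f̃(t) α(x(t), t), â̇ = β 𝒩(t)(v̂ − â), where 𝒩(t) = 1 + μ‖α(x(t), t)‖², γ, β > 0, and μ > γ D₁/β. Then all trajectories (x, â, v̂) remain bounded, f̃ ∈ L², (â − v̂) ∈ L², s ∈ L² ∩ L∞, s(t) → 0 as t → ∞, and x(t) → x_d(t). -/

import Mathlib

/-!
Along trajectories, with `c = 1/D₁ - γ/(βμ) > 0`, the function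
`V = (cη/2) s² + (‖v̂ - a‖² + ‖v̂ - â‖²)/(2γ)` satisfies
`V̇ ≤ -(cη²/2) s² - (c/2) f̃² - (β/γ) ‖v̂ - â‖²`: the monotonicity assumption turns
`f̃ ⟪â - a, α⟫` into at least `f̃²/D₁`, the cross term `f̃ ⟪v̂ - â, α⟫` is absorbed by Young's
inequality into `(γ/(βμ)) f̃²` and the damping `(βμ/γ) ‖α‖² ‖v̂ - â‖²` of the filter, and
`cη s f̃` into `(c/2) f̃² + (cη²/2) s²`. Hence `V` is nonincreasing, which bounds `s`, `v̂` and `â`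
(and then `x` and `f̃`), and integrating `V̇` bounds the `L²` norms. Finally `ṡ = -ηs + f̃` is
bounded, so `s` is Lipschitz and, being in `L²`, tends to zero (Barbalat).
-/

open MeasureTheory Filter
open scoped RealInnerProductSpace ENNReal

noncomputable section

/-- The signal `g` is square-integrable (`L²`) on `[0, ∞)`. -/
def InL2 {F : Type*} [NormedAddCommGroup F] (g : ℝ → F) : Prop :=
  ∫⁻ t in Set.Ici (0 : ℝ), ENNReal.ofReal (‖g t‖ ^ 2) < ⊤

/-- The signal `g` is bounded (`L∞`) on `[0, ∞)`. -/
def InLinf {F : Type*} [NormedAddCommGroup F] (g : ℝ → F) : Prop :=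
  ∃ C : ℝ, ∀ t : ℝ, 0 ≤ t → ‖g t‖ ≤ C

open Set Topology
open scoped NNReal

section Signals

variable {F : Type*} [NormedAddCommGroup F] {f g : ℝ → F}

theorem inLinf_const (v : F) : InLinf fun _ : ℝ => v := ⟨‖v‖, fun _ _ => le_rfl⟩

theorem InLinf.add (hf : InLinf f) (hg : InLinf g) : InLinf fun t => f t + g t := by
  obtain ⟨C, hC⟩ := hf
  obtain ⟨D, hD⟩ := hg
  exact ⟨C + D, fun t ht => (norm_add_le _ _).trans (add_le_add (hC t ht) (hD t ht))⟩

theorem InLinf.sub (hf : InLinf f) (hg : InLinf g) : InLinf fun t => f t - g t := by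
  obtain ⟨C, hC⟩ := hf
  obtain ⟨D, hD⟩ := hg
  exact ⟨C + D, fun t ht => (norm_sub_le _ _).trans (add_le_add (hC t ht) (hD t ht))⟩

theorem InLinf.const_mul {u : ℝ → ℝ} (hu : InLinf u) (c : ℝ) : InLinf fun t => c * u t := by
  obtain ⟨C, hC⟩ := hu
  exact ⟨|c| * C, fun t ht => by rw [norm_mul, Real.norm_eq_abs]; gcongr; exact hC t ht⟩

theorem inLinf_of_mul_sq_le {k C : ℝ} (hk : 0 < k) (h : ∀ t, 0 ≤ t → k * ‖g t‖ ^ 2 ≤ C) :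
    InLinf g :=
  ⟨√(C / k), fun t ht => Real.le_sqrt_of_sq_le <| (le_div_iff₀' hk).2 (h t ht)⟩

theorem InLinf.integrableOn_Icc_norm_sq (hg : InLinf g)
    (hm : AEStronglyMeasurable g (volume.restrict (Ici 0))) (T : ℝ) :
    IntegrableOn (fun t => ‖g t‖ ^ 2) (Icc 0 T) := by
  obtain ⟨C, hC⟩ := hg
  refine Integrable.of_bound
    ((hm.mono_measure (Measure.restrict_mono Icc_subset_Ici_self le_rfl)).norm.pow 2) (C ^ 2)
    (ae_restrict_of_forall_mem measurableSet_Icc fun t ht => ?_)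
  rw [norm_pow, norm_norm]
  exact pow_le_pow_left₀ (norm_nonneg _) (hC t ht.1) 2

theorem aestronglyMeasurable_of_hasDerivAt [NormedSpace ℝ F] [CompleteSpace F] {f' : ℝ → F}
    (hf : ∀ t, 0 ≤ t → HasDerivAt f (f' t) t) :
    AEStronglyMeasurable f' (volume.restrict (Ici 0)) :=
  (aestronglyMeasurable_deriv f _).congr <|
    ae_restrict_of_forall_mem measurableSet_Ici fun t ht => (hf t ht).deriv

theorem InL2.of_mul_sq_le {H : ℝ → ℝ} {k : ℝ} (hk : 0 < k) (hH : IntegrableOn H (Ici 0))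
    (h : ∀ t, 0 ≤ t → k * ‖g t‖ ^ 2 ≤ H t) : InL2 g := by
  refine lt_of_le_of_lt (setLIntegral_mono' measurableSet_Ici fun t ht => ?_)
    (hH.const_mul k⁻¹).lintegral_lt_top
  exact ENNReal.ofReal_le_ofReal <| (le_inv_mul_iff₀ hk).2 (h t ht)

theorem tendsto_setLIntegral_Ioi_atTop_zero {μ : Measure ℝ} {f : ℝ → ℝ≥0∞}
    (hf : ∫⁻ t, f t ∂μ ≠ ⊤) :
    Tendsto (fun T => ∫⁻ t in Ioi T, f t ∂μ) atTop (𝓝 0) := by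
  have : IsFiniteMeasure (μ.withDensity f) := isFiniteMeasure_withDensity hf
  have hInter : (⋂ T : ℝ, Ioi T) = ∅ :=
    eq_empty_of_forall_notMem fun t ht => lt_irrefl t (mem_iInter.1 ht t)
  have := tendsto_measure_iInter_atTop (μ := μ.withDensity f)
    (fun T => measurableSet_Ioi.nullMeasurableSet) (fun _ _ h => Ioi_subset_Ioi h)
    ⟨0, measure_ne_top _ _⟩
  rw [hInter, measure_empty] at this
  exact this.congr fun T => withDensity_apply _ measurableSet_Ioi

/- Barbalat: if `‖g t‖ ≥ ε`, then `‖g‖ ≥ ε/2` on `(t, t + δ]` by the Lipschitz bound, so the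
`L²` mass beyond `t` is at least `ε²δ/4`, which is impossible for large `t`. -/
theorem InL2.tendsto_zero_of_lipschitzOnWith {K : ℝ≥0} (h2 : InL2 g)
    (hg : LipschitzOnWith K g (Ici 0)) : Tendsto g atTop (𝓝 0) := by
  rw [Metric.tendsto_atTop]
  intro ε hε
  set δ := ε / (2 * (K + 1)) with hδ_def
  have hδ : 0 < δ := by positivity
  obtain ⟨N, hN⟩ := eventually_atTop.1 <|
    (tendsto_setLIntegral_Ioi_atTop_zero h2.ne).eventually
      (gt_mem_nhds (a := ENNReal.ofReal (ε ^ 2 / 4) * ENNReal.ofReal δ) (by positivity))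
  refine ⟨max N 0, fun t ht => ?_⟩
  rw [dist_zero_right]
  by_contra! hbad
  have ht0 : 0 ≤ t := le_of_max_le_right ht
  have hnear : ∀ u ∈ Ioc t (t + δ), ε ^ 2 / 4 ≤ ‖g u‖ ^ 2 := by
    intro u hu
    have hdist := hg.dist_le_mul u (ht0.trans hu.1.le) t ht0
    rw [dist_eq_norm, Real.dist_eq, abs_of_pos (sub_pos.2 hu.1)] at hdist
    have hKδ : K * (u - t) ≤ ε / 2 := calc
      K * (u - t) ≤ (K + 1) * δ := by gcongr <;> linarith [hu.1, hu.2]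
      _ = ε / 2 := by rw [hδ_def]; field_simp
    have hlow : ε / 2 ≤ ‖g u‖ := by
      linarith [norm_sub_norm_le (g t) (g u), norm_sub_rev (g t) (g u)]
    calc ε ^ 2 / 4 = (ε / 2) ^ 2 := by ring
      _ ≤ ‖g u‖ ^ 2 := by gcongr
  have hsub : Ioc t (t + δ) ⊆ Ioi N := fun u hu => (le_of_max_le_left ht).trans_lt hu.1
  have hvol : volume.restrict (Ici 0) (Ioc t (t + δ)) = ENNReal.ofReal δ := by
    rw [Measure.restrict_apply measurableSet_Ioc,
      inter_eq_left.2 (Ioc_subset_Ioi_self.trans (Ioi_subset_Ici ht0)), Real.volume_Ioc,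
      add_sub_cancel_left]
  refine (hN N le_rfl).not_ge ?_
  calc ENNReal.ofReal (ε ^ 2 / 4) * ENNReal.ofReal δ
      = ∫⁻ _ in Ioc t (t + δ), ENNReal.ofReal (ε ^ 2 / 4) ∂volume.restrict (Ici 0) := by
        rw [setLIntegral_const, hvol]
    _ ≤ ∫⁻ u in Ioc t (t + δ), ENNReal.ofReal (‖g u‖ ^ 2) ∂volume.restrict (Ici 0) :=
        setLIntegral_mono' measurableSet_Ioc fun u hu => ENNReal.ofReal_le_ofReal (hnear u hu)
    _ ≤ _ := lintegral_mono_set hsub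

theorem InL2.tendsto_zero_of_hasDerivAt [NormedSpace ℝ F] {f' : ℝ → F} (h2 : InL2 f)
    (hf : ∀ t, 0 ≤ t → HasDerivAt f (f' t) t) (hf' : InLinf f') : Tendsto f atTop (𝓝 0) := by
  obtain ⟨C, hC⟩ := hf'
  refine h2.tendsto_zero_of_lipschitzOnWith (K := C.toNNReal) <|
    (convex_Ici 0).lipschitzOnWith_of_nnnorm_hasDerivWithin_le
      (fun t ht => (hf t ht).hasDerivWithinAt) fun t ht => ?_
  rw [← NNReal.coe_le_coe, coe_nnnorm, Real.coe_toNNReal']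
  exact (hC t ht).trans (le_max_left _ _)

end Signals

section Lyapunov

variable {V H : ℝ → ℝ}

theorem antitoneOn_Ici_of_hasDerivAt_le_neg
    (hV : ∀ t, 0 ≤ t → ∃ d, HasDerivAt V d t ∧ d ≤ -H t) (hH : ∀ t, 0 ≤ t → 0 ≤ H t) :
    AntitoneOn V (Ici 0) := by
  choose! V' hV' hle using hV
  refine antitoneOn_of_hasDerivWithinAt_nonpos (f' := V') (convex_Ici 0)
    (fun t ht => (hV' t ht).continuousAt.continuousWithinAt) (fun t ht => ?_) fun t ht => ?_
  all_goals rw [interior_Ici] at ht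
  · exact (hV' t ht.le).hasDerivWithinAt
  · linarith [hle t ht.le, hH t ht.le]

theorem integrableOn_Ici_of_hasDerivAt_le_neg
    (hV : ∀ t, 0 ≤ t → ∃ d, HasDerivAt V d t ∧ d ≤ -H t) (hH : ∀ t, 0 ≤ t → 0 ≤ H t)
    (hV₀ : ∀ t, 0 ≤ t → 0 ≤ V t) (hint : ∀ T, IntegrableOn H (Icc 0 T)) :
    IntegrableOn H (Ici 0) := by
  choose! V' hV' hle using hV
  rw [integrableOn_Ici_iff_integrableOn_Ioi]
  refine integrableOn_Ioi_of_intervalIntegral_norm_bounded (V 0) 0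
    (fun T => (hint T).mono_set Ioc_subset_Icc_self) tendsto_id ?_
  filter_upwards [eventually_ge_atTop 0] with T hT
  have hnorm : ∫ t in (0)..T, ‖H t‖ = ∫ t in (0)..T, H t :=
    intervalIntegral.integral_congr fun t ht => by
      rw [uIcc_of_le hT] at ht
      exact Real.norm_of_nonneg (hH t ht.1)
  have hFTC : ∫ t in (0)..T, H t ≤ -V T - -V 0 :=
    intervalIntegral.integral_le_sub_of_hasDeriv_right_of_le hT
      (fun t ht => (hV' t ht.1).continuousAt.continuousWithinAt.neg)
      (fun t ht => (hV' t ht.1.le).neg.hasDerivWithinAt) (hint T)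
      fun t ht => by linarith [hle t ht.1.le]
  rw [hnorm]
  linarith [hV₀ T hT]

end Lyapunov

theorem mul_sq_le_mul_of_abs_le {k X F : ℝ} (h₁ : 0 ≤ X * F) (h₂ : k * |F| ≤ |X|) :
    k * F ^ 2 ≤ F * X := calc
  k * F ^ 2 = k * |F| * |F| := by rw [mul_assoc, abs_mul_abs_self, sq]
  _ ≤ |X| * |F| := by gcongr
  _ = F * X := by rw [← abs_mul, abs_of_nonneg h₁, mul_comm]

section Momentum

variable {E : Type*} [NormedAddCommGroup E]
  {c η γ β μ D₁ : ℝ} {s F : ℝ → ℝ} {a : E} {A ahat vhat : ℝ → E}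

def momentumLyapunov (c η γ : ℝ) (s : ℝ → ℝ) (a : E) (ahat vhat : ℝ → E) (t : ℝ) : ℝ :=
  c * η / 2 * s t ^ 2 + ‖vhat t - a‖ ^ 2 / (2 * γ) + ‖vhat t - ahat t‖ ^ 2 / (2 * γ)

def momentumDissipation (c η γ β : ℝ) (s F : ℝ → ℝ) (ahat vhat : ℝ → E) (t : ℝ) : ℝ :=
  c * η ^ 2 / 2 * s t ^ 2 + c / 2 * F t ^ 2 + β / γ * ‖vhat t - ahat t‖ ^ 2

section Dissipation

variable [InnerProductSpace ℝ E]

theorem momentum_dissipation_le {S Φ : ℝ} {e u A : E}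
    (hγ : 0 < γ) (hβ : 0 < β) (hμ : 0 < μ) (hc₀ : 0 ≤ c) (hc : c ≤ 1 / D₁ - γ / (β * μ))
    (hmono : 1 / D₁ * Φ ^ 2 ≤ Φ * ⟪e, A⟫) :
    c * η * S * (-η * S + Φ) - Φ * ⟪e + u, A⟫ - Φ * ⟪u, A⟫
        - β / γ * (1 + μ * ‖A‖ ^ 2) * ‖u‖ ^ 2
      ≤ -(c * η ^ 2 / 2 * S ^ 2 + c / 2 * Φ ^ 2 + β / γ * ‖u‖ ^ 2) := by
  set k := γ / (β * μ) with hk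
  have hk₀ : 0 < k := by positivity
  have hcross : -(|Φ| * (‖u‖ * ‖A‖)) ≤ Φ * ⟪u, A⟫ := by
    have := mul_le_mul_of_nonneg_left (abs_real_inner_le_norm u A) (abs_nonneg Φ)
    rw [← abs_mul] at this
    linarith [neg_abs_le (Φ * ⟪u, A⟫)]
  have young : 2 * |Φ| * (‖u‖ * ‖A‖) ≤ k * Φ ^ 2 + β / γ * μ * (‖u‖ * ‖A‖) ^ 2 := by
    have hk_inv : β / γ * μ = k⁻¹ := by rw [hk]; field_simp
    rw [hk_inv, ← sq_abs Φ]
    have key : k * |Φ| ^ 2 + k⁻¹ * (‖u‖ * ‖A‖) ^ 2 - 2 * |Φ| * (‖u‖ * ‖A‖)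
        = k⁻¹ * (k * |Φ| - ‖u‖ * ‖A‖) ^ 2 := by
      field_simp
      ring
    rw [← sub_nonneg, key]
    positivity
  rw [inner_add_left]
  nlinarith [mul_nonneg hc₀ (sq_nonneg (Φ - η * S)), sq_nonneg Φ]

theorem momentumLyapunov_hasDerivAt_le {t : ℝ}
    (hγ : 0 < γ) (hβ : 0 < β) (hμ : 0 < μ) (hc₀ : 0 ≤ c) (hc : c ≤ 1 / D₁ - γ / (β * μ))
    (hs : HasDerivAt s (-η * s t + F t) t)
    (hv : HasDerivAt vhat (-((γ * F t) • A t)) t)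
    (ha : HasDerivAt ahat ((β * (1 + μ * ‖A t‖ ^ 2)) • (vhat t - ahat t)) t)
    (hmono : 1 / D₁ * F t ^ 2 ≤ F t * ⟪ahat t - a, A t⟫) :
    ∃ d, HasDerivAt (momentumLyapunov c η γ s a ahat vhat) d t ∧
      d ≤ -momentumDissipation c η γ β s F ahat vhat t := by
  refine ⟨_, (((hs.pow 2).const_mul _).add ((hv.sub_const a).norm_sq.div_const _)).add
    ((hv.sub ha).norm_sq.div_const _), ?_⟩
  refine le_of_eq_of_le ?_ (momentum_dissipation_le (S := s t) (u := vhat t - ahat t)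
    hγ hβ hμ hc₀ hc hmono)
  rw [Pi.sub_apply, sub_add_sub_cancel', inner_neg_right, inner_sub_right, inner_neg_right,
    real_inner_smul_right, real_inner_smul_right, real_inner_smul_right,
    real_inner_self_eq_norm_sq]
  field_simp
  ring

end Dissipation

theorem momentum_inLinf (hγ : 0 < γ) (hcη : 0 < c * η)
    (hV : ∀ t, 0 ≤ t →
      momentumLyapunov c η γ s a ahat vhat t ≤ momentumLyapunov c η γ s a ahat vhat 0) :
    InLinf s ∧ InLinf ahat ∧ InLinf vhat ∧ InLinf fun t => vhat t - ahat t := by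
  set V₀ := momentumLyapunov c η γ s a ahat vhat 0
  simp only [momentumLyapunov] at hV
  have hterms : ∀ t, 0 ≤ c * η / 2 * s t ^ 2 ∧ 0 ≤ ‖vhat t - a‖ ^ 2 / (2 * γ) ∧
      0 ≤ ‖vhat t - ahat t‖ ^ 2 / (2 * γ) := fun t => ⟨by positivity, by positivity, by positivity⟩
  have hs : InLinf s := inLinf_of_mul_sq_le (C := V₀) (half_pos hcη) fun t ht => by
    rw [Real.norm_eq_abs, sq_abs]
    linarith [hV t ht, hterms t]
  have hva : InLinf fun t => vhat t - a :=
    inLinf_of_mul_sq_le (C := V₀) (by positivity : 0 < 1 / (2 * γ))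
      fun t ht => by rw [one_div_mul_eq_div]; linarith [hV t ht, hterms t]
  have hvu : InLinf fun t => vhat t - ahat t :=
    inLinf_of_mul_sq_le (C := V₀) (by positivity : 0 < 1 / (2 * γ))
      fun t ht => by rw [one_div_mul_eq_div]; linarith [hV t ht, hterms t]
  have hv : InLinf vhat := by simpa using hva.add (inLinf_const a)
  have ha : InLinf ahat := by simpa using hv.sub hvu
  exact ⟨hs, ha, hv, hvu⟩

theorem momentumDissipation_integrableOn_Icc
    (hs : ∀ t, 0 ≤ t → HasDerivAt s (-η * s t + F t) t)
    (hu : ContinuousOn (fun t => vhat t - ahat t) (Ici 0)) (hsb : InLinf s) (hFb : InLinf F) (hub : InLinf fun t => vhat t - ahat t) (T : ℝ) :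
    IntegrableOn (momentumDissipation c η γ β s F ahat vhat) (Icc 0 T) := by
  have hs_meas : AEStronglyMeasurable s (volume.restrict (Ici 0)) :=
    ContinuousOn.aestronglyMeasurable (fun t ht => (hs t ht).continuousAt.continuousWithinAt)
      measurableSet_Ici
  have hF_meas : AEStronglyMeasurable F (volume.restrict (Ici 0)) :=
    ((aestronglyMeasurable_of_hasDerivAt hs).add (hs_meas.const_mul η)).congr
      (ae_of_all _ fun t => by simp only [Pi.add_apply]; ring)
  have hu_meas : AEStronglyMeasurable (fun t => vhat t - ahat t) (volume.restrict (Ici 0)) :=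
    hu.aestronglyMeasurable measurableSet_Ici
  have := (((hsb.integrableOn_Icc_norm_sq hs_meas T).const_mul (c * η ^ 2 / 2)).add
    ((hFb.integrableOn_Icc_norm_sq hF_meas T).const_mul (c / 2))).add
    ((hub.integrableOn_Icc_norm_sq hu_meas T).const_mul (β / γ))
  simp only [Real.norm_eq_abs, sq_abs] at this
  exact this

theorem momentum_inL2 (hγ : 0 < γ) (hβ : 0 < β) (hc : 0 < c) (hη : 0 < η)
    (hH : IntegrableOn (momentumDissipation c η γ β s F ahat vhat) (Ici 0)) :
    InL2 s ∧ InL2 F ∧ InL2 fun t => ahat t - vhat t := by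
  have hterms : ∀ t, 0 ≤ c * η ^ 2 / 2 * s t ^ 2 ∧ 0 ≤ c / 2 * F t ^ 2 ∧
      0 ≤ β / γ * ‖vhat t - ahat t‖ ^ 2 := fun t => ⟨by positivity, by positivity, by positivity⟩
  refine ⟨InL2.of_mul_sq_le (k := c * η ^ 2 / 2) (by positivity) hH fun t _ => ?_,
    InL2.of_mul_sq_le (k := c / 2) (by positivity) hH fun t _ => ?_,
    InL2.of_mul_sq_le (k := β / γ) (by positivity) hH fun t _ => ?_⟩ <;>
  simp only [momentumDissipation, Real.norm_eq_abs, sq_abs, norm_sub_rev (ahat t)] <;>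
  linarith [hterms t]

end Momentum

/-- momentum adaptation law for nonlinearly parameterized dynamics
under the monotonicity assumption. -/
theorem momentum_adaptation_nonlinear
    {n p : ℕ}
    (x xd : ℝ → EuclideanSpace ℝ (Fin n))
    (s : ℝ → ℝ)
    (f : EuclideanSpace ℝ (Fin n) → EuclideanSpace ℝ (Fin p) → ℝ → ℝ)
    (α : EuclideanSpace ℝ (Fin n) → ℝ → EuclideanSpace ℝ (Fin p))
    (a : EuclideanSpace ℝ (Fin p))
    (ahat vhat : ℝ → EuclideanSpace ℝ (Fin p))
    (η γ β μ D₁ : ℝ)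
    (hη : 0 < η) (hγ : 0 < γ) (hβ : 0 < β) (hD₁ : 0 < D₁)
    (hμ : γ * D₁ / β < μ)
    -- monotonicity assumption
    (hmono₁ : ∀ (b : EuclideanSpace ℝ (Fin p)) (ξ : EuclideanSpace ℝ (Fin n)) (t : ℝ),
      0 ≤ t → 0 ≤ ⟪b - a, α ξ t⟫ * (f ξ b t - f ξ a t))
    (hmono₂ : ∀ (b : EuclideanSpace ℝ (Fin p)) (ξ : EuclideanSpace ℝ (Fin n)) (t : ℝ),
      0 ≤ t → (1 / D₁) * |f ξ b t - f ξ a t| ≤ |⟪α ξ t, b - a⟫|)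
    -- error dynamics ṡ = -η s + f̃
    (hs : ∀ t, 0 ≤ t →
      HasDerivAt s (-η * s t + (f (x t) (ahat t) t - f (x t) a t)) t)
    -- momentum adaptation law
    (hv : ∀ t, 0 ≤ t →
      HasDerivAt vhat (-((γ * (f (x t) (ahat t) t - f (x t) a t)) • α (x t) t)) t)
    (ha : ∀ t, 0 ≤ t →
      HasDerivAt ahat ((β * (1 + μ * ‖α (x t) t‖ ^ 2)) • (vhat t - ahat t)) t)
    -- f̃ is locally bounded in (x, â) uniformly in t
    (hfloc : ∀ R : ℝ, ∃ M : ℝ,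
      ∀ (ξ : EuclideanSpace ℝ (Fin n)) (b : EuclideanSpace ℝ (Fin p)) (t : ℝ),
        0 ≤ t → ‖ξ‖ ≤ R → ‖b‖ ≤ R → |f ξ b t - f ξ a t| ≤ M)
    -- boundedness of s implies boundedness of x
    (hsx : InLinf s → InLinf x)
    -- s → 0 implies x → x_d
    (hxd : Tendsto s atTop (nhds 0) →
      Tendsto (fun t => x t - xd t) atTop (nhds 0)) :
    InLinf x ∧ InLinf ahat ∧ InLinf vhat ∧
    InL2 (fun t => f (x t) (ahat t) t - f (x t) a t) ∧
    InL2 (fun t => ahat t - vhat t) ∧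
    (InL2 s ∧ InLinf s) ∧
    Tendsto s atTop (nhds 0) ∧
    Tendsto (fun t => x t - xd t) atTop (nhds 0) := by
  have hμ₀ : 0 < μ := lt_trans (by positivity) hμ
  have hc : 0 < 1 / D₁ - γ / (β * μ) := by
    rw [div_lt_iff₀ hβ] at hμ
    rw [sub_pos, div_lt_div_iff₀ (by positivity) hD₁]
    linarith
  set c := 1 / D₁ - γ / (β * μ)
  set F := fun t => f (x t) (ahat t) t - f (x t) a t
  set V := momentumLyapunov c η γ s a ahat vhat
  set H := momentumDissipation c η γ β s F ahat vhat
  have hH : ∀ t, 0 ≤ t → 0 ≤ H t := fun t _ => by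
    simp only [H, momentumDissipation]; positivity
  have hVdot : ∀ t, 0 ≤ t → ∃ d, HasDerivAt V d t ∧ d ≤ -H t :=
    fun t ht => momentumLyapunov_hasDerivAt_le (A := fun t => α (x t) t) hγ hβ hμ₀ hc.le le_rfl
      (hs t ht) (hv t ht) (ha t ht)
      (mul_sq_le_mul_of_abs_le (hmono₁ _ _ t ht) (real_inner_comm (ahat t - a) _ ▸ hmono₂ _ _ t ht))
  obtain ⟨hsb, hab, hvb, hub⟩ := momentum_inLinf hγ (mul_pos hc hη) fun t ht =>
    antitoneOn_Ici_of_hasDerivAt_le_neg hVdot hH self_mem_Ici ht ht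
  obtain ⟨Cx, hCx⟩ := hsx hsb
  obtain ⟨Ca, hCa⟩ := hab
  obtain ⟨M, hM⟩ := hfloc (max Cx Ca)
  have hFb : InLinf F := ⟨M, fun t ht =>
    hM _ _ t ht ((hCx t ht).trans (le_max_left _ _)) ((hCa t ht).trans (le_max_right _ _))⟩
  have hHint : IntegrableOn H (Ici 0) := integrableOn_Ici_of_hasDerivAt_le_neg hVdot hH
    (fun t _ => by simp only [V, momentumLyapunov]; positivity)
    (momentumDissipation_integrableOn_Icc hs
      (fun t ht => ((hv t ht).sub (ha t ht)).continuousAt.continuousWithinAt) hsb hFb hub)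
  obtain ⟨hs2, hF2, hu2⟩ := momentum_inL2 hγ hβ hc hη hHint
  have hs0 : Tendsto s atTop (𝓝 0) :=
    hs2.tendsto_zero_of_hasDerivAt hs ((hsb.const_mul (-η)).add hFb)
  exact ⟨⟨Cx, hCx⟩, ⟨Ca, hCa⟩, hvb, hF2, hu2, ⟨hs2, hsb⟩, hs0, hxd hs0⟩
end
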